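/- In the free metabelian associative algebra A_2(M), the commutator ideal A_2'(M) (the ideal generated by [v,u]) is a free module over C[u1,v1,u2,v2] with single free generator [v,u], where u1, v1 act by left multiplication by u, v and u2, v2 act by right multiplication by u, v. -/

import Mathlib

/-!
In a metabelian algebra `[a,b] x [c,d] = 0` for all `x`, because
`[a,b] x = [a,bx] - b[a,x]`. Hence left multiplications commute with each other on the commutator
ideal, and so do right multiplications, so `p ↦ p · [v,u]` is well defined: it sends
`u₁^a v₁^b u₂^c v₂^d` to `u^a v^b [v,u] u^c v^d`. Its image is closed under multiplication by the
generators `u, v` on both sides, so it is the whole ideal.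

Injectivity comes from the representation `u ↦ diag(u₁, u₂)`, `v ↦ (v₁ 1; 0 v₂)` by upper
triangular `2 × 2` matrices over `ℂ[u₁,v₁,u₂,v₂]`. Commutators of upper triangular `2 × 2` matrices
are strictly upper triangular, so their products vanish and the representation factors through
`A₂(𝔐)`; it sends `p · [v,u]` to `(u₂ - u₁) p E₀₁`, and `u₂ - u₁` is not a zero divisor.
-/

open MvPolynomial

/-- The relation whose `RingQuot` is the free metabelian associative algebra. -/
def MetabelianRel (X : Type*) (x y : FreeAlgebra ℂ X) : Prop :=
  (∃ f1 f2 f3 f4 : FreeAlgebra ℂ X,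
    x = (f1 * f2 - f2 * f1) * (f3 * f4 - f4 * f3)) ∧ y = 0

/-- The free metabelian associative algebra on two generators over `ℂ`. -/
abbrev FreeMetabelian2 : Type := RingQuot (MetabelianRel (Fin 2))

noncomputable def Ugen : FreeMetabelian2 :=
  RingQuot.mkAlgHom ℂ (MetabelianRel (Fin 2)) (FreeAlgebra.ι ℂ 0)

noncomputable def Vgen : FreeMetabelian2 :=
  RingQuot.mkAlgHom ℂ (MetabelianRel (Fin 2)) (FreeAlgebra.ι ℂ 1)

section Metabelian

variable {R : Type*} [Ring R]

theorem commutator_mul_mul_commutator_eq_zero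
    (hR : ∀ a b c d : R, (a * b - b * a) * (c * d - d * c) = 0) (a b x c d : R) :
    (a * b - b * a) * x * (c * d - d * c) = 0 := by
  have hx : (a * b - b * a) * x = (a * (b * x) - b * x * a) - b * (a * x - x * a) := by
    noncomm_ring
  rw [hx, sub_mul, hR, mul_assoc b, hR, mul_zero, sub_zero]

theorem mul_left_comm_on_commutator_ideal
    (hR : ∀ a b c d : R, (a * b - b * a) * (c * d - d * c) = 0) (a b x c d y : R) :
    a * (b * (x * (c * d - d * c) * y)) = b * (a * (x * (c * d - d * c) * y)) := by
  rw [← sub_eq_zero]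
  calc _ = (a * b - b * a) * x * (c * d - d * c) * y := by noncomm_ring
    _ = 0 := by rw [commutator_mul_mul_commutator_eq_zero hR, zero_mul]

theorem mul_right_comm_on_commutator_ideal
    (hR : ∀ a b c d : R, (a * b - b * a) * (c * d - d * c) = 0) (a b x c d y : R) :
    x * (c * d - d * c) * y * a * b = x * (c * d - d * c) * y * b * a := by
  rw [← sub_eq_zero]
  calc _ = x * ((c * d - d * c) * y * (a * b - b * a)) := by noncomm_ring
    _ = 0 := by rw [commutator_mul_mul_commutator_eq_zero hR, mul_zero]

end Metabelian

theorem MetabelianRel.commutator_mul_commutator_eq_zero {X : Type*}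
    (a b c d : RingQuot (MetabelianRel X)) : (a * b - b * a) * (c * d - d * c) = 0 := by
  obtain ⟨f₁, rfl⟩ := RingQuot.mkAlgHom_surjective ℂ (MetabelianRel X) a
  obtain ⟨f₂, rfl⟩ := RingQuot.mkAlgHom_surjective ℂ (MetabelianRel X) b
  obtain ⟨f₃, rfl⟩ := RingQuot.mkAlgHom_surjective ℂ (MetabelianRel X) c
  obtain ⟨f₄, rfl⟩ := RingQuot.mkAlgHom_surjective ℂ (MetabelianRel X) d
  simpa only [map_mul, map_sub, map_zero] using
    RingQuot.mkAlgHom_rel ℂ (s := MetabelianRel X) ⟨⟨f₁, f₂, f₃, f₄, rfl⟩, rfl⟩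

theorem Submodule.mul_mem_of_adjoin_eq_top_left {R A : Type*} [CommSemiring R] [Semiring A]
    [Algebra R A] {s : Set A} (hs : Algebra.adjoin R s = ⊤) {S : Submodule R A}
    (hS : ∀ g ∈ s, ∀ x ∈ S, g * x ∈ S) (a : A) {x : A} (hx : x ∈ S) : a * x ∈ S := by
  have ha : a ∈ Algebra.adjoin R s := hs ▸ Algebra.mem_top
  induction ha using Algebra.adjoin_induction generalizing x with
  | mem g hg => exact hS g hg x hx
  | algebraMap r => simpa only [Algebra.algebraMap_eq_smul_one, smul_mul_assoc, one_mul]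
      using S.smul_mem r hx
  | add a b _ _ ha hb => rw [add_mul]; exact S.add_mem (ha hx) (hb hx)
  | mul a b _ _ ha hb => rw [mul_assoc]; exact ha (hb hx)

theorem Submodule.mul_mem_of_adjoin_eq_top_right {R A : Type*} [CommSemiring R] [Semiring A]
    [Algebra R A] {s : Set A} (hs : Algebra.adjoin R s = ⊤) {S : Submodule R A}
    (hS : ∀ g ∈ s, ∀ x ∈ S, x * g ∈ S) (a : A) {x : A} (hx : x ∈ S) : x * a ∈ S := by
  have ha : a ∈ Algebra.adjoin R s := hs ▸ Algebra.mem_top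
  induction ha using Algebra.adjoin_induction generalizing x with
  | mem g hg => exact hS g hg x hx
  | algebraMap r => simpa only [Algebra.algebraMap_eq_smul_one, mul_smul_comm, mul_one]
      using S.smul_mem r hx
  | add a b _ _ ha hb => rw [mul_add]; exact S.add_mem (ha hx) (hb hx)
  | mul a b _ _ ha hb => rw [← mul_assoc]; exact hb (ha hx)

namespace Matrix.IsUpperTriangular

variable {S : Type*} [CommRing S] {A B C D : Matrix (Fin 2) (Fin 2) S}

theorem commutator_mul_commutator_eq_zero (hA : A.IsUpperTriangular)
    (hB : B.IsUpperTriangular) (hC : C.IsUpperTriangular) (hD : D.IsUpperTriangular) :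
    (A * B - B * A) * (C * D - D * C) = 0 := by
  have h : (0 : Fin 2) < 1 := Fin.zero_lt_one
  ext i j
  fin_cases i <;> fin_cases j <;> simp [Matrix.mul_apply, hA h, hB h, hC h, hD h] <;> ring

theorem mul_single_zero_one (hA : A.IsUpperTriangular) (g : S) :
    A * single 0 1 g = single 0 1 (A 0 0 * g) := by
  ext i j
  fin_cases i <;> fin_cases j <;> simp [Matrix.mul_apply, hA Fin.zero_lt_one]

theorem single_zero_one_mul (hA : A.IsUpperTriangular) (g : S) :
    single 0 1 g * A = single 0 1 (g * A 1 1) := by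
  ext i j
  fin_cases i <;> fin_cases j <;> simp [Matrix.mul_apply, hA Fin.zero_lt_one]

end Matrix.IsUpperTriangular

namespace FreeMetabelian2

theorem adjoin_Ugen_Vgen : Algebra.adjoin ℂ {Ugen, Vgen} = ⊤ := by
  have hgen : ({Ugen, Vgen} : Set FreeMetabelian2) =
      RingQuot.mkAlgHom ℂ (MetabelianRel (Fin 2)) '' Set.range (FreeAlgebra.ι ℂ) := by
    ext; simp [Ugen, Vgen, Fin.exists_fin_two, eq_comm]
  rw [hgen, ← AlgHom.map_adjoin, FreeAlgebra.adjoin_range_ι, Algebra.map_top,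
    AlgHom.range_eq_top]
  exact RingQuot.mkAlgHom_surjective ℂ _

noncomputable def monomialAction (m : Fin 4 →₀ ℕ) : FreeMetabelian2 :=
  Ugen ^ m 0 * Vgen ^ m 1 * (Vgen * Ugen - Ugen * Vgen) * (Ugen ^ m 2 * Vgen ^ m 3)

noncomputable def polyAction : MvPolynomial (Fin 4) ℂ →ₗ[ℂ] FreeMetabelian2 :=
  (basisMonomials (Fin 4) ℂ).constr ℂ monomialAction

theorem polyAction_monomial (m : Fin 4 →₀ ℕ) (a : ℂ) :
    polyAction (monomial m a) = a • monomialAction m := by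
  calc polyAction (monomial m a) = polyAction (a • basisMonomials (Fin 4) ℂ m) := by
        rw [coe_basisMonomials, smul_monomial, smul_eq_mul, mul_one]
    _ = a • monomialAction m := by rw [map_smul, polyAction, Module.Basis.constr_basis]

theorem polyAction_one : polyAction 1 = Vgen * Ugen - Ugen * Vgen := by
  rw [one_def, polyAction_monomial, one_smul]
  simp [monomialAction]

theorem polyAction_X_mul {i : Fin 4} {f : FreeMetabelian2 →ₗ[ℂ] FreeMetabelian2}
    (hf : ∀ m, monomialAction (Finsupp.single i 1 + m) = f (monomialAction m))
    (p : MvPolynomial (Fin 4) ℂ) : polyAction (X i * p) = f (polyAction p) := by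
  suffices polyAction ∘ₗ LinearMap.mulLeft ℂ (X i) = f ∘ₗ polyAction from
    LinearMap.congr_fun this p
  refine (basisMonomials (Fin 4) ℂ).ext fun m => ?_
  simp [coe_basisMonomials, X, monomial_mul, polyAction_monomial, hf]

theorem polyAction_X_zero_mul (p : MvPolynomial (Fin 4) ℂ) :
    polyAction (X 0 * p) = Ugen * polyAction p :=
  polyAction_X_mul (f := LinearMap.mulLeft ℂ Ugen) (fun m => by
    simp [monomialAction, add_comm 1, pow_succ', mul_assoc]) p

theorem polyAction_X_one_mul (p : MvPolynomial (Fin 4) ℂ) :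
    polyAction (X 1 * p) = Vgen * polyAction p :=
  polyAction_X_mul (f := LinearMap.mulLeft ℂ Vgen) (fun m => by
    have h := mul_left_comm_on_commutator_ideal MetabelianRel.commutator_mul_commutator_eq_zero
      (Ugen ^ m 0) Vgen (Vgen ^ m 1) Vgen Ugen (Ugen ^ m 2 * Vgen ^ m 3)
    simpa [monomialAction, add_comm 1, pow_succ', mul_assoc] using h) p

theorem polyAction_X_two_mul (p : MvPolynomial (Fin 4) ℂ) :
    polyAction (X 2 * p) = polyAction p * Ugen :=
  polyAction_X_mul (f := LinearMap.mulRight ℂ Ugen) (fun m => by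
    have h := mul_right_comm_on_commutator_ideal MetabelianRel.commutator_mul_commutator_eq_zero
      Ugen (Vgen ^ m 3) (Ugen ^ m 0 * Vgen ^ m 1) Vgen Ugen (Ugen ^ m 2)
    simpa [monomialAction, add_comm 1, pow_succ, mul_assoc] using h) p

theorem polyAction_X_three_mul (p : MvPolynomial (Fin 4) ℂ) :
    polyAction (X 3 * p) = polyAction p * Vgen :=
  polyAction_X_mul (f := LinearMap.mulRight ℂ Vgen) (fun m => by
    simp [monomialAction, add_comm 1, pow_succ, mul_assoc]) p

theorem range_polyAction : LinearMap.range polyAction =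
    Submodule.span ℂ {x | ∃ a b : FreeMetabelian2, x = a * (Vgen * Ugen - Ugen * Vgen) * b} := by
  refine le_antisymm ?_ (Submodule.span_le.mpr ?_)
  · rw [polyAction, Module.Basis.constr_range]
    refine Submodule.span_mono ?_
    rintro _ ⟨m, rfl⟩
    exact ⟨_, _, rfl⟩
  · rintro _ ⟨a, b, rfl⟩
    have hleft : ∀ g ∈ ({Ugen, Vgen} : Set FreeMetabelian2), ∀ x ∈ LinearMap.range polyAction,
        g * x ∈ LinearMap.range polyAction := by
      rintro g (rfl | rfl) _ ⟨p, rfl⟩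
      exacts [⟨X 0 * p, polyAction_X_zero_mul p⟩, ⟨X 1 * p, polyAction_X_one_mul p⟩]
    have hright : ∀ g ∈ ({Ugen, Vgen} : Set FreeMetabelian2), ∀ x ∈ LinearMap.range polyAction,
        x * g ∈ LinearMap.range polyAction := by
      rintro g (rfl | rfl) _ ⟨p, rfl⟩
      exacts [⟨X 2 * p, polyAction_X_two_mul p⟩, ⟨X 3 * p, polyAction_X_three_mul p⟩]
    refine Submodule.mul_mem_of_adjoin_eq_top_right adjoin_Ugen_Vgen hright b
      (Submodule.mul_mem_of_adjoin_eq_top_left adjoin_Ugen_Vgen hleft a ⟨1, polyAction_one⟩)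

noncomputable def triangularGen :
    Fin 2 → Matrix.blockTriangularSubalgebra ℂ (MvPolynomial (Fin 4) ℂ) (id : Fin 2 → Fin 2) :=
  ![⟨!![X 0, 0; 0, X 2], fun i j h => by fin_cases i <;> fin_cases j <;> simp_all⟩,
    ⟨!![X 1, 1; 0, X 3], fun i j h => by fin_cases i <;> fin_cases j <;> simp_all⟩]

noncomputable def toMatrix :
    FreeMetabelian2 →ₐ[ℂ] Matrix (Fin 2) (Fin 2) (MvPolynomial (Fin 4) ℂ) :=
  RingQuot.liftAlgHom ℂ ⟨(Subalgebra.val _).comp (FreeAlgebra.lift ℂ triangularGen), by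
    rintro _ _ ⟨⟨f₁, f₂, f₃, f₄, rfl⟩, rfl⟩
    simp only [map_mul, map_sub, map_zero]
    exact Matrix.IsUpperTriangular.commutator_mul_commutator_eq_zero (Subtype.prop _)
      (Subtype.prop _) (Subtype.prop _) (Subtype.prop _)⟩

theorem isUpperTriangular_toMatrix (x : FreeMetabelian2) : (toMatrix x).IsUpperTriangular := by
  obtain ⟨f, rfl⟩ := RingQuot.mkAlgHom_surjective ℂ (MetabelianRel (Fin 2)) x
  rw [toMatrix, RingQuot.liftAlgHom_mkAlgHom_apply]
  exact Subtype.prop _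

theorem toMatrix_Ugen : toMatrix Ugen = !![X 0, 0; 0, X 2] := by
  rw [Ugen, toMatrix, RingQuot.liftAlgHom_mkAlgHom_apply]
  simp [triangularGen]

theorem toMatrix_Vgen : toMatrix Vgen = !![X 1, 1; 0, X 3] := by
  rw [Vgen, toMatrix, RingQuot.liftAlgHom_mkAlgHom_apply]
  simp [triangularGen]

theorem toMatrix_commutator :
    toMatrix (Vgen * Ugen - Ugen * Vgen) = Matrix.single 0 1 (X 2 - X 0) := by
  rw [map_sub, map_mul, map_mul, toMatrix_Ugen, toMatrix_Vgen]
  ext i j : 1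
  fin_cases i <;> fin_cases j <;> simp [mul_comm]

theorem toMatrix_polyAction (p : MvPolynomial (Fin 4) ℂ) :
    toMatrix (polyAction p) = Matrix.single 0 1 ((X 2 - X 0) * p) := by
  induction p using MvPolynomial.induction_on with
  | C a =>
    rw [C_eq_smul_one, map_smul, polyAction_one, map_smul, toMatrix_commutator,
      Matrix.smul_single, mul_smul_comm, mul_one]
  | add p q hp hq => rw [map_add, map_add, hp, hq, mul_add, Matrix.single_add]
  | mul_X p i hp =>
    have hU := isUpperTriangular_toMatrix Ugen
    have hV := isUpperTriangular_toMatrix Vgen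
    rw [mul_comm p]
    fin_cases i <;> simp only [Fin.zero_eta, Fin.mk_one, Fin.reduceFinMk]
    · rw [polyAction_X_zero_mul, map_mul, hp, hU.mul_single_zero_one, toMatrix_Ugen]
      simp [mul_assoc, mul_comm, mul_left_comm]
    · rw [polyAction_X_one_mul, map_mul, hp, hV.mul_single_zero_one, toMatrix_Vgen]
      simp [mul_assoc, mul_comm, mul_left_comm]
    · rw [polyAction_X_two_mul, map_mul, hp, hU.single_zero_one_mul, toMatrix_Ugen]
      simp [mul_assoc, mul_comm, mul_left_comm]
    · rw [polyAction_X_three_mul, map_mul, hp, hV.single_zero_one_mul, toMatrix_Vgen]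
      simp [mul_assoc, mul_comm, mul_left_comm]

theorem injective_polyAction : Function.Injective polyAction := by
  have hX : (X 2 - X 0 : MvPolynomial (Fin 4) ℂ) ≠ 0 :=
    sub_ne_zero.mpr (X_injective.ne (by decide))
  intro p q hpq
  have hentry := congrFun (congrFun (congrArg toMatrix hpq) 0) 1
  rw [toMatrix_polyAction, toMatrix_polyAction, Matrix.single_apply_same,
    Matrix.single_apply_same] at hentry
  exact mul_left_cancel₀ hX hentry

end FreeMetabelian2

theorem commutator_ideal_free_module :
    ∃ Φ : MvPolynomial (Fin 4) ℂ →ₗ[ℂ] FreeMetabelian2,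
      Function.Injective Φ ∧
      Φ 1 = Vgen * Ugen - Ugen * Vgen ∧
      (∀ p, Φ (X 0 * p) = Ugen * Φ p) ∧
      (∀ p, Φ (X 1 * p) = Vgen * Φ p) ∧
      (∀ p, Φ (X 2 * p) = Φ p * Ugen) ∧
      (∀ p, Φ (X 3 * p) = Φ p * Vgen) ∧
      LinearMap.range Φ =
        Submodule.span ℂ
          {x : FreeMetabelian2 | ∃ a b : FreeMetabelian2,
            x = a * (Vgen * Ugen - Ugen * Vgen) * b} :=
  ⟨FreeMetabelian2.polyAction, FreeMetabelian2.injective_polyAction,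
    FreeMetabelian2.polyAction_one, FreeMetabelian2.polyAction_X_zero_mul,
    FreeMetabelian2.polyAction_X_one_mul, FreeMetabelian2.polyAction_X_two_mul,
    FreeMetabelian2.polyAction_X_three_mul, FreeMetabelian2.range_polyAction⟩
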